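/- arXiv:1305.3566 — 4 statements merged into one kernel-verified Lean document; each statement's English description precedes it below -/
import Mathlib

section
/- Let $m_0,\ldots,m_n$ and $m_{n-2},m_{n-1},m_n,m_{n+1},\ldots,m_N$ be geodesics in the curve graph (so $d(m_i,m_j)=|i-j|$ within each range), and suppose $d(m_0,m_j) \ge n$ whenever $j \ge n$. Then for all $i,j$ with $j - i \ge 3$, we have $d(m_i,m_j) \ge 3$. -/
/-- If `m 0, ..., m n` and `m (n-2), ..., m N` are geodesics (in an
integer-valued metric, e.g. the curve graph), and `d (m 0) (m j) ≥ n` whenever `j ≥ n`,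
then any two entries with index difference at least 3 are at distance at least 3
(i.e. the multipath is filling). -/
theorem overlapping_geodesics_give_filling_multipath
    {X : Type*} (d : X → X → ℕ)
    (hsymm : ∀ x y : X, d x y = d y x)
    (htri : ∀ x y z : X, d x z ≤ d x y + d y z)
    (n N : ℕ) (hn : 2 ≤ n) (hnN : n ≤ N) (m : ℕ → X)
    (hgeo1 : ∀ i j, i ≤ n → j ≤ n → (d (m i) (m j) : ℤ) = |(i : ℤ) - (j : ℤ)|)
    (hgeo2 : ∀ i j, n - 2 ≤ i → i ≤ N → n - 2 ≤ j → j ≤ N →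
      (d (m i) (m j) : ℤ) = |(i : ℤ) - (j : ℤ)|)
    (hfar : ∀ j, n ≤ j → j ≤ N → n ≤ d (m 0) (m j)) :
    ∀ i j, i ≤ N → j ≤ N → i + 3 ≤ j → 3 ≤ d (m i) (m j) := by
  intro i j hiN hjN hij
  by_cases hjn : j ≤ n
  · have h := hgeo1 i j (by omega) hjn
    have : (0:ℤ) ≤ (j:ℤ) - i := by push_cast; omega
    rw [abs_sub_comm, abs_of_nonneg this] at h
    omega
  · by_cases hin : n - 2 ≤ i
    · have h := hgeo2 i j hin hiN (by omega) hjN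
      have : (0:ℤ) ≤ (j:ℤ) - i := by push_cast; omega
      rw [abs_sub_comm, abs_of_nonneg this] at h
      omega
    · have h0i : (d (m 0) (m i) : ℤ) = i := by
        have h := hgeo1 0 i (by omega) (by omega)
        simpa using h
      have hf := hfar j (by omega) hjN
      have ht := htri (m 0) (m i) (m j)
      omega
end

section
/- Suppose $m_0,\ldots,m_n$ and $m_n,m_{n+1},\ldots,m_N$ (with $N \ge n+3$) are geodesics in an integer-valued path metric space, and $d(m_0,m_i) \ge n+1$ whenever $i \ge n+1$. If there exist indices $i,j$ with $j-i\ge 3$ and $d(m_i,m_j) \le 2$, then necessarily $i = n-1$ and $j \in \{n+2, n+3\}$. -/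
/-- If `m 0, ..., m n` and `m n, ..., m N` (with `N ≥ n + 3`) are geodesics
in an integer-valued path metric, `d (m 0) (m i) ≥ n + 1` whenever `i ≥ n + 1`, and there
are indices `i, j` with `j - i ≥ 3` and `d (m i) (m j) ≤ 2` (a failure to fill), then
necessarily `i = n - 1` and `j ∈ {n + 2, n + 3}`. -/
theorem failure_to_fill_is_localized
    {X : Type*} (d : X → X → ℕ)
    (hsymm : ∀ x y : X, d x y = d y x)
    (htri : ∀ x y z : X, d x z ≤ d x y + d y z)
    (hmid : ∀ x y : X, d x y ≤ 2 → ∃ c : X, d x c ≤ 1 ∧ d c y ≤ 1)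
    (n N : ℕ) (hn : 1 ≤ n) (hnN : n + 3 ≤ N) (m : ℕ → X)
    (hgeo1 : ∀ i j, i ≤ n → j ≤ n → (d (m i) (m j) : ℤ) = |(i : ℤ) - (j : ℤ)|)
    (hgeo2 : ∀ i j, n ≤ i → i ≤ N → n ≤ j → j ≤ N →
      (d (m i) (m j) : ℤ) = |(i : ℤ) - (j : ℤ)|)
    (hfar : ∀ i, n + 1 ≤ i → i ≤ N → n + 1 ≤ d (m 0) (m i)) :
    ∀ i j, i ≤ N → j ≤ N → i + 3 ≤ j → d (m i) (m j) ≤ 2 →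
      i = n - 1 ∧ (j = n + 2 ∨ j = n + 3) := by
  intro i j hiN hjN hij hd
  have hd' : (d (m i) (m j) : ℤ) ≤ 2 := by exact_mod_cast hd
  -- i < n
  have hiltn : i < n := by
    by_contra h
    push_neg at h
    have he := hgeo2 i j h hiN (by omega) hjN
    rw [he] at hd'
    rcases abs_cases ((i : ℤ) - j) with ⟨h1, _⟩ | ⟨h1, _⟩ <;> omega
  -- j > n
  have hjgtn : n < j := by
    by_contra h
    push_neg at h
    have he := hgeo1 i j (by omega) h
    rw [he] at hd'
    rcases abs_cases ((i : ℤ) - j) with ⟨h1, _⟩ | ⟨h1, _⟩ <;> omega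
  -- d (m 0) (m i) = i
  have h0i : (d (m 0) (m i) : ℤ) = i := by
    have := hgeo1 0 i (by omega) (by omega)
    rw [this]
    rw [abs_of_nonpos (by push_cast; omega)]
    push_cast
    ring
  have hfarj := hfar j (by omega) hjN
  have ht1 := htri (m 0) (m i) (m j)
  have hieq : i = n - 1 := by omega
  -- d (m n) (m j) = j - n
  have hnj : (d (m n) (m j) : ℤ) = (j : ℤ) - n := by
    have := hgeo2 n j le_rfl (by omega) (by omega) hjN
    rw [this, abs_of_nonpos (by push_cast; omega)]
    ring
  have hni : (d (m n) (m i) : ℤ) = 1 := by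
    have := hgeo1 n i le_rfl (by omega)
    rw [this, abs_of_nonneg (by push_cast; omega)]
    push_cast
    omega
  have ht2 := htri (m n) (m i) (m j)
  have ht2' : ((j : ℤ) - n) ≤ (d (m n) (m i) : ℤ) + (d (m i) (m j) : ℤ) := by
    rw [← hnj]; exact_mod_cast ht2
  rw [hni] at ht2'
  constructor
  · exact hieq
  · omega
end

section
/- Under the hypotheses of the ordering lemma (a geodesic $(m_i)$, points $c_a,c,c_b$ each within distance $r$ of the geodesic, with $d(c_a,c)+d(c,c_b)=d(c_a,c_b)$ and $d(c_a,c)=d(c,c_b)=4r+1$), it is impossible to have indices $i<k<j$ with $d(c_a,m_i)\le r$, $d(c,m_j)\le r$, $d(c_b,m_k)\le r$: any such triple satisfies either $i<j<k$ or $k<j<i$. -/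
/-- under the hypotheses of the ordering lemma, indices close to `ca`, `c`,
`cb` respectively must occur in monotone order: either `i < j < k` or `k < j < i`;
in particular `i < k < j` is impossible. -/
theorem ordering_lemma_monotone_order
    {X : Type*} (d : X → X → ℕ)
    (hsymm : ∀ x y : X, d x y = d y x)
    (htri : ∀ x y z : X, d x z ≤ d x y + d y z)
    (m : ℤ → X)
    (hgeo : ∀ i j : ℤ, d (m i) (m j) = (i - j).natAbs)
    (r : ℕ) (ca c cb : X)
    (hnear_a : ∃ i : ℤ, d ca (m i) ≤ r)
    (hnear_c : ∃ i : ℤ, d c (m i) ≤ r)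
    (hnear_b : ∃ i : ℤ, d cb (m i) ≤ r)
    (hadd : d ca c + d c cb = d ca cb)
    (h1 : d ca c = 4 * r + 1) (h2 : d c cb = 4 * r + 1)
    (i j k : ℤ)
    (hi : d ca (m i) ≤ r) (hj : d c (m j) ≤ r) (hk : d cb (m k) ≤ r) :
    (i < j ∧ j < k) ∨ (k < j ∧ j < i) := by
  have hab : d ca cb = 8 * r + 2 := by omega
  have hij_lb : 2 * r + 1 ≤ (i - j).natAbs := by
    have t1 := htri ca (m i) c
    have t2 := htri (m i) (m j) c
    rw [hgeo] at t2
    have hjc : d (m j) c ≤ r := by rw [hsymm]; exact hj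
    omega
  have hij_ub : (i - j).natAbs ≤ 6 * r + 1 := by
    have t1 := htri (m i) ca (m j)
    have t2 := htri ca c (m j)
    rw [hgeo] at t1
    have hia : d (m i) ca ≤ r := by rw [hsymm]; exact hi
    have hcj : d c (m j) ≤ r := hj
    omega
  have hjk_lb : 2 * r + 1 ≤ (j - k).natAbs := by
    have t1 := htri c (m j) cb
    have t2 := htri (m j) (m k) cb
    rw [hgeo] at t2
    have hkb : d (m k) cb ≤ r := by rw [hsymm]; exact hk
    omega
  have hjk_ub : (j - k).natAbs ≤ 6 * r + 1 := by
    have t1 := htri (m j) c (m k)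
    have t2 := htri c cb (m k)
    rw [hgeo] at t1
    have hjc : d (m j) c ≤ r := by rw [hsymm]; exact hj
    have hbk : d cb (m k) ≤ r := hk
    omega
  have hik_lb : 6 * r + 2 ≤ (i - k).natAbs := by
    have t1 := htri ca (m i) cb
    have t2 := htri (m i) (m k) cb
    rw [hgeo] at t2
    have hkb : d (m k) cb ≤ r := by rw [hsymm]; exact hk
    omega
  omega
end

section
/- In a $\delta$-hyperbolic geodesic metric space, let $c$ and $\psi(c)$ be points joined by a geodesic $\pi$, let $\pi_T$ be another geodesic, let $\gamma \in \pi_T$ be a nearest point projection of $c$ to $\pi_T$ and $\gamma' \in \pi_T$ a nearest point projection of $\psi(c)$ to $\pi_T$. Then every point $\alpha$ on $\pi_T$ between $\gamma$ and $\gamma'$ with $d(\alpha, \{\gamma, \gamma'\}) \ge 4\delta + 1$ satisfies $d(\alpha, \pi) \le 2\delta$. -/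
/-- `f` parametrizes a geodesic from `a` to `b` of length `L` in `X`. -/
def GeodesicFrom {X : Type*} [MetricSpace X] (f : ℝ → X) (a b : X) (L : ℝ) : Prop :=
  0 ≤ L ∧ f 0 = a ∧ f L = b ∧
    ∀ s ∈ Set.Icc (0 : ℝ) L, ∀ t ∈ Set.Icc (0 : ℝ) L, dist (f s) (f t) = |s - t|

/-- The slim triangles condition. -/
def SlimTriangles (X : Type*) [MetricSpace X] (δ : ℝ) : Prop :=
  ∀ (a b c : X) (f₁ f₂ f₃ : ℝ → X) (L₁ L₂ L₃ : ℝ),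
    GeodesicFrom f₁ a b L₁ → GeodesicFrom f₂ b c L₂ → GeodesicFrom f₃ c a L₃ →
    ∀ p ∈ f₁ '' Set.Icc 0 L₁,
      ∃ q ∈ (f₂ '' Set.Icc 0 L₂) ∪ (f₃ '' Set.Icc 0 L₃), dist p q ≤ δ

lemma dist_to_start {X : Type*} [MetricSpace X] {f : ℝ → X} {a b : X} {L : ℝ}
    (hf : GeodesicFrom f a b L) {u : ℝ} (hu : u ∈ Set.Icc (0 : ℝ) L) :
    dist a (f u) = u := by
  have h := hf.2.2.2 0 ⟨le_refl 0, hf.1⟩ u hu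
  rw [hf.2.1] at h
  rw [h, abs_of_nonpos (by linarith [hu.1])]; ring

lemma dist_to_end {X : Type*} [MetricSpace X] {f : ℝ → X} {a b : X} {L : ℝ}
    (hf : GeodesicFrom f a b L) {u : ℝ} (hu : u ∈ Set.Icc (0 : ℝ) L) :
    dist (f u) b = L - u := by
  have h := hf.2.2.2 u hu L ⟨hf.1, le_refl L⟩
  rw [hf.2.2.1] at h
  rw [h, abs_of_nonpos (by linarith [hu.2])]; ring

lemma key_fellow_travel
    {X : Type*} [MetricSpace X] (δ : ℝ) (hδ : 0 ≤ δ)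
    (hgeo : ∀ a b : X, ∃ (f : ℝ → X) (L : ℝ), GeodesicFrom f a b L)
    (hslim : SlimTriangles X δ)
    (c ψc : X)
    (fπ : ℝ → X) (Lπ : ℝ) (hπ : GeodesicFrom fπ c ψc Lπ)
    (fT : ℝ → X) (LT : ℝ) (hT : ∀ s ∈ Set.Icc (0 : ℝ) LT, ∀ t ∈ Set.Icc (0 : ℝ) LT,
        dist (fT s) (fT t) = |s - t|)
    (s₀ s₁ s : ℝ)
    (hs₀ : s₀ ∈ Set.Icc (0 : ℝ) LT) (hs₁ : s₁ ∈ Set.Icc (0 : ℝ) LT)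
    (hproj₀ : ∀ t ∈ Set.Icc (0 : ℝ) LT, dist c (fT s₀) ≤ dist c (fT t))
    (hproj₁ : ∀ t ∈ Set.Icc (0 : ℝ) LT, dist ψc (fT s₁) ≤ dist ψc (fT t))
    (hss₀ : s₀ ≤ s) (hss₁ : s ≤ s₁)
    (hfar₀ : 4 * δ + 1 ≤ dist (fT s) (fT s₀))
    (hfar₁ : 4 * δ + 1 ≤ dist (fT s) (fT s₁)) :
    ∃ p ∈ fπ '' Set.Icc 0 Lπ, dist (fT s) p ≤ 2 * δ := by
  have hsI : s ∈ Set.Icc (0 : ℝ) LT := ⟨le_trans hs₀.1 hss₀, le_trans hss₁ hs₁.2⟩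
  -- the segment of π_T from γ = fT s₀ to γ' = fT s₁
  set g : ℝ → X := fun t => fT (s₀ + t) with hg_def
  have hg : GeodesicFrom g (fT s₀) (fT s₁) (s₁ - s₀) := by
    refine ⟨by linarith, by simp [hg_def], ?_, ?_⟩
    · show fT (s₀ + (s₁ - s₀)) = fT s₁; congr 1; ring
    · intro u hu v hv
      have h := hT (s₀ + u) ⟨by linarith [hu.1, hs₀.1], by linarith [hu.2, hs₁.2]⟩
        (s₀ + v) ⟨by linarith [hv.1, hs₀.1], by linarith [hv.2, hs₁.2]⟩
      rw [show s₀ + u - (s₀ + v) = u - v by ring] at h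
      exact h
  obtain ⟨f₂, L₂, hf₂⟩ := hgeo (fT s₁) c
  obtain ⟨f₃, L₃, hf₃⟩ := hgeo c (fT s₀)
  have hα : fT s ∈ g '' Set.Icc 0 (s₁ - s₀) := by
    refine ⟨s - s₀, ⟨by linarith, by linarith⟩, ?_⟩
    show fT (s₀ + (s - s₀)) = fT s; congr 1; ring
  obtain ⟨q, hq, hdq⟩ := hslim (fT s₀) (fT s₁) c g f₂ f₃ _ L₂ L₃ hg hf₂ hf₃ (fT s) hα
  rcases hq with hq | hq
  · -- q is on the diagonal [γ', c]; slim the triangle (γ', c, ψc)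
    obtain ⟨h, L', hh⟩ := hgeo ψc (fT s₁)
    obtain ⟨r, hr, hdr⟩ := hslim (fT s₁) c ψc f₂ fπ h L₂ Lπ L' hf₂ hπ hh q hq
    rcases hr with hr | hr
    · exact ⟨r, hr, by
        calc dist (fT s) r ≤ dist (fT s) q + dist q r := dist_triangle _ _ _
        _ ≤ 2 * δ := by linarith⟩
    · -- r on [ψc, γ'] : contradiction with γ' nearest point for ψc
      exfalso
      obtain ⟨u, hu, rfl⟩ := hr
      have h1 : dist ψc (h u) = u := dist_to_start hh hu
      have h2 : dist (h u) (fT s₁) = L' - u := dist_to_end hh hu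
      have h3 : dist ψc (fT s₁) = L' := by
        have := dist_to_end hh ⟨le_refl 0, hh.1⟩
        rw [hh.2.1] at this; linarith [this]
      have h4 : dist ψc (fT s₁) ≤ dist ψc (fT s) := hproj₁ s hsI
      have h5 : dist ψc (fT s) ≤ dist ψc (h u) + dist (h u) q + dist q (fT s) := by
        calc dist ψc (fT s) ≤ dist ψc (h u) + dist (h u) (fT s) := dist_triangle _ _ _
        _ ≤ dist ψc (h u) + (dist (h u) q + dist q (fT s)) := by
            linarith [dist_triangle (h u) q (fT s)]
        _ = _ := by ring
      have h6 : dist (fT s) (fT s₁) ≤ dist (fT s) q + dist q (h u) + dist (h u) (fT s₁) := by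
        calc dist (fT s) (fT s₁) ≤ dist (fT s) q + dist q (fT s₁) := dist_triangle _ _ _
        _ ≤ dist (fT s) q + (dist q (h u) + dist (h u) (fT s₁)) := by
            linarith [dist_triangle q (h u) (fT s₁)]
        _ = _ := by ring
      have hc1 : dist (h u) q = dist q (h u) := dist_comm _ _
      have hc2 : dist q (fT s) = dist (fT s) q := dist_comm _ _
      linarith
  · -- q on [c, γ] : contradiction with γ nearest point for c
    exfalso
    obtain ⟨u, hu, rfl⟩ := hq
    have h1 : dist c (f₃ u) = u := dist_to_start hf₃ hu
    have h2 : dist (f₃ u) (fT s₀) = L₃ - u := dist_to_end hf₃ hu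
    have h3 : dist c (fT s₀) = L₃ := by
      have := dist_to_end hf₃ ⟨le_refl 0, hf₃.1⟩
      rw [hf₃.2.1] at this; linarith [this]
    have h4 : dist c (fT s₀) ≤ dist c (fT s) := hproj₀ s hsI
    have h5 : dist c (fT s) ≤ dist c (f₃ u) + dist (f₃ u) (fT s) := dist_triangle _ _ _
    have h6 : dist (fT s) (fT s₀) ≤ dist (fT s) (f₃ u) + dist (f₃ u) (fT s₀) :=
      dist_triangle _ _ _
    have hc : dist (f₃ u) (fT s) = dist (fT s) (f₃ u) := dist_comm _ _
    linarith

/-- in a `δ`-hyperbolic geodesic space, let `π` be a geodesic from `c` to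
`ψc`, let `π_T` be another geodesic, and let `γ = f_T s₀`, `γ' = f_T s₁` be nearest
point projections of `c` and `ψc` to `π_T`. Then any point `α = f_T s` between `γ` and
`γ'` along `π_T` with `d(α, γ) ≥ 4δ + 1` and `d(α, γ') ≥ 4δ + 1` satisfies
`d(α, π) ≤ 2δ`. -/
theorem deep_points_between_projections_fellow_travel
    {X : Type*} [MetricSpace X] (δ : ℝ) (hδ : 0 ≤ δ)
    (hgeo : ∀ a b : X, ∃ (f : ℝ → X) (L : ℝ), GeodesicFrom f a b L)
    (hslim : SlimTriangles X δ)
    (c ψc : X)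
    (fπ : ℝ → X) (Lπ : ℝ) (hπ : GeodesicFrom fπ c ψc Lπ)
    (fT : ℝ → X) (LT : ℝ) (aT bT : X) (hT : GeodesicFrom fT aT bT LT)
    (s₀ s₁ s : ℝ)
    (hs₀ : s₀ ∈ Set.Icc (0 : ℝ) LT) (hs₁ : s₁ ∈ Set.Icc (0 : ℝ) LT)
    (hproj₀ : ∀ t ∈ Set.Icc (0 : ℝ) LT, dist c (fT s₀) ≤ dist c (fT t))
    (hproj₁ : ∀ t ∈ Set.Icc (0 : ℝ) LT, dist ψc (fT s₁) ≤ dist ψc (fT t))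
    (hbetween : (s₀ ≤ s ∧ s ≤ s₁) ∨ (s₁ ≤ s ∧ s ≤ s₀))
    (hfar₀ : 4 * δ + 1 ≤ dist (fT s) (fT s₀))
    (hfar₁ : 4 * δ + 1 ≤ dist (fT s) (fT s₁)) :
    ∃ p ∈ fπ '' Set.Icc 0 Lπ, dist (fT s) p ≤ 2 * δ := by
  rcases hbetween with ⟨h1, h2⟩ | ⟨h1, h2⟩
  · exact key_fellow_travel δ hδ hgeo hslim c ψc fπ Lπ hπ fT LT hT.2.2.2
      s₀ s₁ s hs₀ hs₁ hproj₀ hproj₁ h1 h2 hfar₀ hfar₁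
  · -- reverse π to go from ψc to c and swap roles
    have hπ' : GeodesicFrom (fun t => fπ (Lπ - t)) ψc c Lπ := by
      refine ⟨hπ.1, by simp [hπ.2.2.1], by simp [hπ.2.1], ?_⟩
      intro u hu v hv
      have h := hπ.2.2.2 (Lπ - u) ⟨by linarith [hu.2], by linarith [hu.1]⟩
        (Lπ - v) ⟨by linarith [hv.2], by linarith [hv.1]⟩
      rw [h, show Lπ - u - (Lπ - v) = -(u - v) by ring, abs_neg]
    obtain ⟨p, ⟨u, hu, rfl⟩, hp⟩ := key_fellow_travel δ hδ hgeo hslim ψc c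
      (fun t => fπ (Lπ - t)) Lπ hπ' fT LT hT.2.2.2
      s₁ s₀ s hs₁ hs₀ hproj₁ hproj₀ h1 h2 hfar₁ hfar₀
    exact ⟨fπ (Lπ - u), ⟨Lπ - u, ⟨by linarith [hu.2], by linarith [hu.1]⟩, rfl⟩, hp⟩
end
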